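/- Consider NCE for 1d Gaussian mean estimation with P* = N(R,1), Q = N(0,1), parameterization τ = [b,c], T(x) = [x,−1]. For every τ = [b,c] ∈ R², the gradient norm satisfies ||∇L(τ)||₂ ≤ 32·max{R, |b|}. -/

import Mathlib

/-!
Since `(p - p*) / (p / q + 1) = (p - p*) · q / (p + q)` and `0 ≤ q / (p + q) ≤ 1`, the integrand
is bounded by `q + p*` whatever `τ` is. Hence `|∇L(τ)₁| ≤ 1`, and `|∇L(τ)₀|` is at most half the
sum of the first absolute moments of `N(0,1)` and `N(R,1)`, which are `≤ 1` and `≤ R + 1`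
(from `|x - m| ≤ (1 + (x - m)²) / 2` and the variance). So `‖∇L(τ)‖₂ ≤ 2 + R / 2 ≤ 32 R` once
`R ≥ 1`.
-/

open MeasureTheory

/-- Noise density `q = N(0,1)`. -/
noncomputable def qpdf (x : ℝ) : ℝ :=
  (1 / Real.sqrt (2 * Real.pi)) * Real.exp (-x ^ 2 / 2)

/-- Data density `p* = N(R,1)`. -/
noncomputable def ppdf (R x : ℝ) : ℝ :=
  (1 / Real.sqrt (2 * Real.pi)) * Real.exp (-(x - R) ^ 2 / 2)

/-- Model density `p(x) = exp(−x²/2 + bx − c)` for parameter `τ = [b,c]`. -/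
noncomputable def pmodel (b c x : ℝ) : ℝ :=
  Real.exp (-x ^ 2 / 2 + b * x - c)

/-- The gradient of the NCE loss, `∇L(τ) = (1/2) ∫ (p−p*)/(p/q + 1) T(x) dx` with
`T(x) = [x, −1]`. -/
noncomputable def gradNCE (R b c : ℝ) (i : Fin 2) : ℝ :=
  (1 / 2) * ∫ x : ℝ, ((pmodel b c x - ppdf R x) / (pmodel b c x / qpdf x + 1)) *
    ![x, (-1 : ℝ)] i

open ProbabilityTheory NNReal

lemma Real.sqrt_sq_add_sq_le_abs_add_abs (a b : ℝ) : √(a ^ 2 + b ^ 2) ≤ |a| + |b| := by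
  simpa [Complex.norm_eq_sqrt_sq_add_sq] using Complex.norm_le_abs_re_add_abs_im ⟨a, b⟩

lemma abs_sub_div_div_add_one_le {p q s : ℝ} (hp : 0 ≤ p) (hq : 0 < q) (hs : 0 ≤ s) :
    |(p - s) / (p / q + 1)| ≤ q + s := by
  have hD : p / q + 1 = (p + q) / q := by field_simp
  rw [hD, div_div_eq_mul_div, abs_div, abs_of_pos (by positivity : 0 < p + q),
    div_le_iff₀ (by positivity), abs_le]
  constructor <;> nlinarith [mul_nonneg hp hs, mul_nonneg hs hq.le]

lemma MeasureTheory.Integrable.gaussianPDFReal_smul {E : Type*} [NormedAddCommGroup E]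
    [NormedSpace ℝ E] {μ : ℝ} {v : ℝ≥0} {f : ℝ → E} (hv : v ≠ 0)
    (hf : Integrable f (gaussianReal μ v)) :
    Integrable (fun x ↦ gaussianPDFReal μ v x • f x) := by
  rw [gaussianReal_of_var_ne_zero _ hv, integrable_withDensity_iff_integrable_smul'
    (measurable_gaussianPDF _ _) (ae_of_all _ fun _ ↦ gaussianPDF_lt_top)] at hf
  simpa [toReal_gaussianPDF] using hf

lemma integral_abs_gaussianReal_le (μ : ℝ) (v : ℝ≥0) :
    ∫ x, |x| ∂gaussianReal μ v ≤ |μ| + (1 + v) / 2 := by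
  have hvar : ∫ x, (x - μ) ^ 2 ∂gaussianReal μ v = v := by
    simpa [variance_eq_integral measurable_id.aemeasurable] using variance_id_gaussianReal
  have hsq : Integrable (fun x ↦ (x - μ) ^ 2) (gaussianReal μ v) := by
    simpa [sub_eq_add_neg] using
      ((memLp_id_gaussianReal 2).sub (memLp_const μ)).integrable_sq
  have hbound : Integrable (fun x ↦ (1 + (x - μ) ^ 2) / 2) (gaussianReal μ v) :=
    ((integrable_const 1).add hsq).div_const 2
  calc ∫ x, |x| ∂gaussianReal μ v
      ≤ ∫ x, (|μ| + (1 + (x - μ) ^ 2) / 2) ∂gaussianReal μ v := by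
        refine integral_mono ((memLp_id_gaussianReal 1).integrable le_rfl).abs
          ((integrable_const _).add hbound) fun x ↦ ?_
        have htri := abs_sub_abs_le_abs_sub x μ
        have hamgm : |x - μ| ≤ (1 + (x - μ) ^ 2) / 2 := by
          nlinarith [sq_abs (x - μ), sq_nonneg (|x - μ| - 1)]
        linarith
    _ = |μ| + (1 + v) / 2 := by
        rw [integral_add (integrable_const _) hbound, integral_div,
          integral_add (integrable_const 1) hsq, hvar]
        simp

lemma qpdf_eq_gaussianPDFReal : qpdf = gaussianPDFReal 0 1 := by
  ext x; simp [qpdf, gaussianPDFReal]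

lemma ppdf_eq_gaussianPDFReal (R : ℝ) : ppdf R = gaussianPDFReal R 1 := by
  ext x; simp [ppdf, gaussianPDFReal]

lemma abs_integral_nce_mul_le (R b c : ℝ) {t : ℝ → ℝ} (ht₀ : Integrable t (gaussianReal 0 1))
    (htR : Integrable t (gaussianReal R 1)) :
    |∫ x, (pmodel b c x - ppdf R x) / (pmodel b c x / qpdf x + 1) * t x|
      ≤ ∫ x, |t x| ∂gaussianReal 0 1 + ∫ x, |t x| ∂gaussianReal R 1 := by
  have hdom (μ : ℝ) (ht : Integrable t (gaussianReal μ 1)) :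
      Integrable (fun x ↦ gaussianPDFReal μ 1 x • |t x|) :=
    ht.abs.gaussianPDFReal_smul one_ne_zero
  rw [integral_gaussianReal_eq_integral_smul one_ne_zero,
    integral_gaussianReal_eq_integral_smul one_ne_zero,
    ← integral_add (hdom 0 ht₀) (hdom R htR), ← Real.norm_eq_abs]
  refine norm_integral_le_of_norm_le ((hdom 0 ht₀).add (hdom R htR)) (ae_of_all _ fun x ↦ ?_)
  rw [qpdf_eq_gaussianPDFReal, ppdf_eq_gaussianPDFReal, Real.norm_eq_abs, abs_mul, smul_eq_mul,
    smul_eq_mul, ← add_mul]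
  gcongr
  exact abs_sub_div_div_add_one_le (Real.exp_pos _).le (gaussianPDFReal_pos 0 1 x one_ne_zero)
    (gaussianPDFReal_nonneg R 1 x)

lemma abs_gradNCE_zero_le (R b c : ℝ) : |gradNCE R b c 0| ≤ 1 + |R| / 2 := by
  have hid (μ : ℝ) : Integrable (fun x ↦ x) (gaussianReal μ 1) :=
    (memLp_id_gaussianReal 1).integrable le_rfl
  have h := abs_integral_nce_mul_le R b c (hid 0) (hid R)
  have h₀ := integral_abs_gaussianReal_le 0 1
  have hR := integral_abs_gaussianReal_le R 1
  simp only [gradNCE, Matrix.cons_val_zero, abs_mul]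
  norm_num at h₀ hR ⊢
  linarith

lemma abs_gradNCE_one_le (R b c : ℝ) : |gradNCE R b c 1| ≤ 1 := by
  have h := abs_integral_nce_mul_le R b c (t := fun _ ↦ -1) (integrable_const _)
    (integrable_const _)
  simp only [gradNCE, Matrix.cons_val_one, Matrix.cons_val_fin_one, abs_mul]
  norm_num at h ⊢
  linarith

/-- For 1d Gaussian NCE (`P* = N(R,1)`, `Q = N(0,1)`, `τ = [b,c]`, `T(x) = [x,−1]`), the
gradient norm satisfies `‖∇L(τ)‖₂ ≤ 32·max{R, |b|}` for every `τ ∈ ℝ²` (for `R` large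
enough). -/
theorem nce_gradient_norm_bound :
    ∃ R0 : ℝ, ∀ R : ℝ, R0 ≤ R → ∀ b c : ℝ,
      Real.sqrt ((gradNCE R b c 0) ^ 2 + (gradNCE R b c 1) ^ 2) ≤ 32 * max R |b| := by
  refine ⟨1, fun R hR b c ↦ ?_⟩
  have h₀ := abs_gradNCE_zero_le R b c
  have h₁ := abs_gradNCE_one_le R b c
  rw [abs_of_pos (by linarith : 0 < R)] at h₀
  calc √(gradNCE R b c 0 ^ 2 + gradNCE R b c 1 ^ 2)
      ≤ |gradNCE R b c 0| + |gradNCE R b c 1| := Real.sqrt_sq_add_sq_le_abs_add_abs _ _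
    _ ≤ 32 * R := by linarith
    _ ≤ 32 * max R |b| := by gcongr; exact le_max_left _ _
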